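/- For every {1,2}-word x ∈ F: e_α(x) = 1 if x is domino-tileable and e_α(x) = 0 otherwise; and e_β(x) = v(x) if x is domino-tileable and e_β(x) = 0 otherwise. -/

import Mathlib

open scoped Classical

/-- A word in the letters `{1, 2}`. -/
def IsFibWord (x : List ℕ) : Prop := ∀ c ∈ x, c = 1 ∨ c = 2

/-- The cover relation `x ⋖ y` of the Fibonacci differential poset `F`
(positions indexed from `0`): `x` is obtained from `y` either (a) by changing a
`2` all of whose left neighbours are `2`'s into a `1`, or (b) by deleting the
first `1` occurring in `y`. -/
def FibCov (x y : List ℕ) : Prop :=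
  (∃ i : ℕ, i < y.length ∧ y.getD i 0 = 2 ∧ (∀ j : ℕ, j < i → y.getD j 0 = 2) ∧
    x = y.set i 1) ∨
  (∃ i : ℕ, i < y.length ∧ y.getD i 0 = 1 ∧ (∀ j : ℕ, j < i → y.getD j 0 = 2) ∧
    x = y.eraseIdx i)

/-- The edge signs of the signed Fibonacci posets `F_α` (`alpha = true`) and
`F_β` (`alpha = false`) for a cover `x ⋖ y`.  With 1-based positions, both are
`(−1)^{i+1}` on a deletion of the first `1` at position `i`; on a change of the
`2` in position `i` into a `1`, `s_α = (−1)^{i+1}` while `s_β = (−1)^i`.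
(Positions of lists are 0-based here, shifting the exponents by one.) -/
noncomputable def fibS (alpha : Bool) (x y : List ℕ) : ℤ :=
  if x.length = y.length then
    (-1) ^ (sInf {i : ℕ | x.getD i 0 ≠ y.getD i 0} + (if alpha then 0 else 1))
  else
    (-1) ^ (sInf {i : ℕ | y.getD i 0 = 1})

/-- The sign of a saturated chain, recorded as a list: the product of the
edge signs `s` over consecutive pairs. -/
def chainSign {α : Type*} (s : α → α → ℤ) : List α → ℤ
  | [] => 1
  | [_] => 1
  | x :: y :: rest => s x y * chainSign s (y :: rest)

/-- Maximal chains from the empty word `∅` to `x` in the Fibonacci poset. -/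
def fibChains (x : List ℕ) : Set (List (List ℕ)) :=
  {l : List (List ℕ) | l.Chain' FibCov ∧ l.head? = some ([] : List ℕ) ∧
    l.getLast? = some x}

/-- `e_α(x)` (`alpha = true`) resp. `e_β(x)` (`alpha = false`): the signed sum
of maximal chains from `∅` to `x` in the signed Fibonacci poset. -/
noncomputable def eFib (alpha : Bool) (x : List ℕ) : ℤ :=
  ∑ᶠ l ∈ fibChains x, chainSign (fibS alpha) l

/-- `v(x) = (−1)^{number of 2's in x}`. -/
def vWord (x : List ℕ) : ℤ := (-1) ^ (x.count 2)

/-- The (nonempty) maximal consecutive run of `1`'s of `x` starting at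
position `i` and of length `k`. -/
def IsOneRun (x : List ℕ) (i k : ℕ) : Prop :=
  i + k ≤ x.length ∧ 0 < k ∧
  (∀ j : ℕ, i ≤ j → j < i + k → x.getD j 0 = 1) ∧
  (i = 0 ∨ x.getD (i - 1) 0 ≠ 1) ∧
  (i + k = x.length ∨ x.getD (i + k) 0 ≠ 1)

/-- A word is domino-tileable if every maximal consecutive run of `1`'s, other
than a run starting at the first position, has even length. -/
def DominoTileable (x : List ℕ) : Prop :=
  ∀ i k : ℕ, IsOneRun x i k → i ≠ 0 → Even k


/-! ### Section 1: basic lemmas -/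

lemma sum_set_two : ∀ (x : List ℕ) (i : ℕ), i < x.length → x.getD i 0 = 2 →
    (x.set i 1).sum + 1 = x.sum := by
  intro x
  induction x with
  | nil => intro i h; simp at h
  | cons c t ih =>
    intro i hi hg
    cases i with
    | zero => simp_all; omega
    | succ j =>
      simp only [List.getD_cons_succ] at hg
      simp only [List.length_cons, Nat.succ_lt_succ_iff] at hi
      simp only [List.set_cons_succ, List.sum_cons]
      have := ih j hi hg
      omega

lemma sum_eraseIdx_one : ∀ (x : List ℕ) (i : ℕ), i < x.length → x.getD i 0 = 1 →
    (x.eraseIdx i).sum + 1 = x.sum := by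
  intro x
  induction x with
  | nil => intro i h; simp at h
  | cons c t ih =>
    intro i hi hg
    cases i with
    | zero => simp_all; omega
    | succ j =>
      simp only [List.getD_cons_succ] at hg
      simp only [List.length_cons, Nat.succ_lt_succ_iff] at hi
      simp only [List.eraseIdx_cons_succ, List.sum_cons]
      have := ih j hi hg
      omega

lemma FibCov.sum_lt {y x : List ℕ} (h : FibCov y x) : y.sum + 1 = x.sum := by
  rcases h with ⟨i, hi, hg, _, rfl⟩ | ⟨i, hi, hg, _, rfl⟩
  · exact sum_set_two x i hi hg
  · exact sum_eraseIdx_one x i hi hg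

lemma FibCov.fibWord {y x : List ℕ} (hx : IsFibWord x) (h : FibCov y x) : IsFibWord y := by
  rcases h with ⟨i, hi, hg, _, rfl⟩ | ⟨i, hi, hg, _, rfl⟩
  · intro c hc
    rcases List.mem_or_eq_of_mem_set hc with h | rfl
    · exact hx c h
    · left; rfl
  · intro c hc
    exact hx c (List.mem_of_mem_eraseIdx hc)

/-! ### Section 2: the finite set of covers -/

def coversF : List ℕ → Finset (List ℕ)
  | [] => ∅
  | c :: w => if c = 1 then {w}
      else if c = 2 then insert (1 :: w) ((coversF w).image (fun z => 2 :: z))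
      else ∅

lemma coversF_one (w : List ℕ) : coversF (1 :: w) = {w} := by simp [coversF]

lemma coversF_two (w : List ℕ) :
    coversF (2 :: w) = insert (1 :: w) ((coversF w).image (fun z => 2 :: z)) := by
  simp [coversF]

lemma not_fibCov_nil (y : List ℕ) : ¬ FibCov y [] := by
  rintro (⟨i, hi, _⟩ | ⟨i, hi, _⟩) <;> simp at hi

lemma fibCov_one_iff (y w : List ℕ) : FibCov y (1 :: w) ↔ y = w := by
  constructor
  · rintro (⟨i, hi, hg, hj, rfl⟩ | ⟨i, hi, hg, hj, rfl⟩)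
    · exfalso
      cases i with
      | zero => simp at hg
      | succ j => have := hj 0 (Nat.succ_pos j); simp at this
    · cases i with
      | zero => simp
      | succ j => exfalso; have := hj 0 (Nat.succ_pos j); simp at this
  · rintro rfl
    right
    exact ⟨0, by simp, by simp, by omega, by simp⟩

lemma fibCov_two_iff (y w : List ℕ) :
    FibCov y (2 :: w) ↔ y = 1 :: w ∨ ∃ z, FibCov z w ∧ y = 2 :: z := by
  constructor
  · rintro (⟨i, hi, hg, hj, rfl⟩ | ⟨i, hi, hg, hj, rfl⟩)
    · cases i with
      | zero => left; simp
      | succ j =>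
        right
        refine ⟨w.set j 1, Or.inl ⟨j, ?_, ?_, ?_, rfl⟩, by simp⟩
        · simpa using hi
        · simpa using hg
        · intro k hk
          have := hj (k + 1) (by omega)
          simpa using this
    · cases i with
      | zero => simp at hg
      | succ j =>
        right
        refine ⟨w.eraseIdx j, Or.inr ⟨j, ?_, ?_, ?_, rfl⟩, by simp⟩
        · simpa using hi
        · simpa using hg
        · intro k hk
          have := hj (k + 1) (by omega)
          simpa using this
  · rintro (rfl | ⟨z, hz, rfl⟩)
    · left
      exact ⟨0, by simp, by simp, by omega, by simp⟩
    · rcases hz with ⟨i, hi, hg, hj, rfl⟩ | ⟨i, hi, hg, hj, rfl⟩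
      · left
        refine ⟨i + 1, by simpa using hi, by simpa using hg, ?_, by simp⟩
        intro k hk
        cases k with
        | zero => simp
        | succ m => simpa using hj m (by omega)
      · right
        refine ⟨i + 1, by simpa using hi, by simpa using hg, ?_, by simp⟩
        intro k hk
        cases k with
        | zero => simp
        | succ m => simpa using hj m (by omega)

lemma mem_coversF {y x : List ℕ} : y ∈ coversF x ↔ FibCov y x := by
  induction x generalizing y with
  | nil => simp [coversF, not_fibCov_nil]
  | cons c w ih =>
    by_cases h1 : c = 1
    · subst h1
      rw [coversF_one, fibCov_one_iff, Finset.mem_singleton]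
    by_cases h2 : c = 2
    · subst h2
      rw [coversF_two, fibCov_two_iff]
      simp only [Finset.mem_insert, Finset.mem_image]
      constructor
      · rintro (rfl | ⟨z, hz, rfl⟩)
        · left; rfl
        · right; exact ⟨z, ih.1 hz, rfl⟩
      · rintro (rfl | ⟨z, hz, rfl⟩)
        · left; rfl
        · right; exact ⟨z, ih.2 hz, rfl⟩
    · simp only [coversF, if_neg h1, if_neg h2, Finset.notMem_empty, false_iff]
      rintro (⟨i, hi, hg, hj, rfl⟩ | ⟨i, hi, hg, hj, rfl⟩)
      · cases i with
        | zero => simp at hg; exact h2 hg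
        | succ j => have := hj 0 (Nat.succ_pos j); simp at this; exact h2 this
      · cases i with
        | zero => simp at hg; exact h1 hg
        | succ j => have := hj 0 (Nat.succ_pos j); simp at this; exact h2 this

/-! ### Section 3: sign computations -/

lemma nat_sInf_shift {P Q : ℕ → Prop} (h0 : ¬ Q 0) (hs : ∀ j, Q (j + 1) ↔ P j)
    (hne : ∃ n, P n) : sInf {i | Q i} = sInf {i | P i} + 1 := by
  obtain ⟨n, hn⟩ := hne
  have hQne : {i | Q i}.Nonempty := ⟨n + 1, (hs n).2 hn⟩
  have h1 : sInf {i | Q i} ∈ {i | Q i} := Nat.sInf_mem hQne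
  have h2 : sInf {i | P i} ∈ {i | P i} := Nat.sInf_mem ⟨n, hn⟩
  have hle : sInf {i | Q i} ≤ sInf {i | P i} + 1 := Nat.sInf_le ((hs _).2 h2)
  cases hq : sInf {i | Q i} with
  | zero => exact absurd (hq ▸ h1) h0
  | succ m =>
    have hm : P m := (hs m).1 (hq ▸ h1)
    have : sInf {i | P i} ≤ m := Nat.sInf_le hm
    omega

lemma fibS_del_head (a : Bool) (w : List ℕ) : fibS a w (1 :: w) = 1 := by
  have hlen : w.length ≠ (1 :: w).length := by simp
  rw [fibS, if_neg hlen]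
  have : sInf {i : ℕ | (1 :: w).getD i 0 = 1} = 0 :=
    Nat.sInf_eq_zero.2 (Or.inl (by simp))
  rw [this, pow_zero]

lemma fibS_chg_head (a : Bool) (w : List ℕ) :
    fibS a (1 :: w) (2 :: w) = if a then 1 else -1 := by
  have hlen : (1 :: w).length = (2 :: w).length := by simp
  rw [fibS, if_pos hlen]
  have : sInf {i : ℕ | (1 :: w).getD i 0 ≠ (2 :: w).getD i 0} = 0 :=
    Nat.sInf_eq_zero.2 (Or.inl (by simp))
  rw [this, zero_add]
  cases a <;> simp

lemma fibS_cons_two {a : Bool} {y x : List ℕ} (h : FibCov y x) :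
    fibS a (2 :: y) (2 :: x) = -fibS a y x := by
  rcases h with ⟨i, hi, hg, hj, rfl⟩ | ⟨i, hi, hg, hj, rfl⟩
  · have hlen : (x.set i 1).length = x.length := List.length_set
    have hlen2 : (2 :: x.set i 1).length = (2 :: x).length := by simp [hlen]
    have hne : ∃ n, (x.set i 1).getD n 0 ≠ x.getD n 0 := by
      refine ⟨i, ?_⟩
      have h1 : (x.set i 1).getD i 0 = 1 := by
        simp [List.getD, List.getElem?_set_eq_of_lt _ hi]
      have h2 : x.getD i 0 = 2 := hg
      omega
    rw [fibS, fibS, if_pos hlen2, if_pos hlen]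
    rw [nat_sInf_shift (P := fun j => (x.set i 1).getD j 0 ≠ x.getD j 0)
      (by simp) (fun j => by simp) hne]
    ring
  · have hxlen : 0 < x.length := by omega
    have hlen : (x.eraseIdx i).length ≠ x.length := by
      rw [List.length_eraseIdx]; simp only [if_pos hi]; omega
    have hlen2 : (2 :: x.eraseIdx i).length ≠ (2 :: x).length := by
      simp only [List.length_cons]; omega
    have hne : ∃ n, x.getD n 0 = 1 := ⟨i, hg⟩
    rw [fibS, fibS, if_neg hlen2, if_neg hlen]
    rw [nat_sInf_shift (P := fun j => x.getD j 0 = 1)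
      (by simp) (fun j => by simp) hne]
    ring

/-! ### Section 4: chain machinery -/

lemma chainSign_singleton {α : Type*} (s : α → α → ℤ) (a : α) : chainSign s [a] = 1 := rfl

lemma chainSign_concat {α : Type*} (s : α → α → ℤ) :
    ∀ (l : List α) (y x : α), l.getLast? = some y →
      chainSign s (l ++ [x]) = chainSign s l * s y x := by
  intro l
  induction l with
  | nil => intro y x h; simp at h
  | cons a t ih =>
    intro y x h
    cases t with
    | nil =>
      simp only [List.getLast?_singleton, Option.some.injEq] at h
      subst h
      simp [chainSign]
    | cons b t' =>
      have hl : (b :: t').getLast? = some y := by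
        rwa [List.getLast?_cons_cons] at h
      have hih := ih y x hl
      simp only [List.cons_append, chainSign, List.append_eq] at hih ⊢
      rw [hih]
      ring

lemma mem_fibChains_iff {x : List ℕ} (hx : x ≠ []) {l : List (List ℕ)} :
    l ∈ fibChains x ↔ ∃ y l', FibCov y x ∧ l' ∈ fibChains y ∧ l = l' ++ [x] := by
  constructor
  · rintro ⟨hc, hh, hg⟩
    have hdec : l.dropLast ++ [x] = l := List.dropLast_append_getLast? x hg
    have hdne : l.dropLast ≠ [] := by
      intro hd
      rw [hd, List.nil_append] at hdec
      rw [← hdec] at hh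
      simp only [List.head?_cons, Option.some.injEq] at hh
      exact hx hh
    have hc' := hc
    rw [← hdec, List.Chain', List.isChain_append] at hc'
    obtain ⟨hc1, -, hc3⟩ := hc'
    have hgl : l.dropLast.getLast? = some (l.dropLast.getLast hdne) :=
      List.getLast?_eq_getLast hdne
    have hh' : l.dropLast.head? = some [] := by
      rw [← hdec, List.head?_append, List.head?_eq_head hdne] at hh
      simp only [Option.some_or, Option.some.injEq] at hh
      rw [List.head?_eq_head hdne, hh]
    exact ⟨l.dropLast.getLast hdne, l.dropLast, hc3 _ hgl x (by simp),
      ⟨hc1, hh', hgl⟩, hdec.symm⟩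
  · rintro ⟨y, l', hcov, ⟨hc, hh, hg⟩, rfl⟩
    have hlne : l' ≠ [] := by rintro rfl; simp at hh
    refine ⟨?_, ?_, List.getLast?_concat⟩
    · rw [List.Chain', List.isChain_append]
      refine ⟨hc, List.isChain_singleton x, ?_⟩
      intro a ha b hb
      simp only [List.head?_cons, Option.mem_def, Option.some.injEq] at hb
      rw [hg] at ha
      simp only [Option.mem_def, Option.some.injEq] at ha
      subst ha; subst hb
      exact hcov
    · rw [List.head?_append, List.head?_eq_head hlne]
      rw [List.head?_eq_head hlne] at hh
      simpa using hh

lemma fibChains_nil : fibChains ([] : List ℕ) = {[([] : List ℕ)]} := by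
  ext l
  simp only [Set.mem_singleton_iff]
  constructor
  · rintro ⟨hc, hh, hg⟩
    have hdec : l.dropLast ++ [([] : List ℕ)] = l := List.dropLast_append_getLast? _ hg
    rcases eq_or_ne l.dropLast [] with hd | hd
    · rw [hd, List.nil_append] at hdec
      exact hdec.symm
    · exfalso
      rw [← hdec, List.Chain', List.isChain_append] at hc
      obtain ⟨-, -, hc3⟩ := hc
      have hgl : l.dropLast.getLast? = some (l.dropLast.getLast hd) :=
        List.getLast?_eq_getLast hd
      exact not_fibCov_nil _ (hc3 _ hgl [] (by simp))
  · rintro rfl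
    exact ⟨List.isChain_singleton _, rfl, rfl⟩
lemma fibChains_finite (x : List ℕ) : (fibChains x).Finite := by
  generalize hn : x.sum = n
  induction n using Nat.strong_induction_on generalizing x with
  | _ n ih =>
    rcases eq_or_ne x [] with rfl | hx
    · rw [fibChains_nil]; exact Set.finite_singleton _
    · have hsub : fibChains x ⊆
          ⋃ y ∈ (coversF x : Set (List ℕ)), (fun l => l ++ [x]) '' fibChains y := by
        intro l hl
        obtain ⟨y, l', hcov, hl', rfl⟩ := (mem_fibChains_iff hx).1 hl
        exact Set.mem_biUnion (by simpa [mem_coversF] using hcov) ⟨l', hl', rfl⟩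
      refine Set.Finite.subset (Set.Finite.biUnion (coversF x).finite_toSet ?_) hsub
      intro y hy
      have hcov : FibCov y x := mem_coversF.1 (by simpa using hy)
      have : y.sum < n := by have := hcov.sum_lt; omega
      exact Set.Finite.image _ (ih y.sum this y rfl)

lemma eFib_nil (a : Bool) : eFib a [] = 1 := by
  rw [eFib, fibChains_nil, finsum_mem_singleton, chainSign_singleton]

lemma eFib_eq_sum (a : Bool) (x : List ℕ) :
    eFib a x = ∑ l ∈ (fibChains_finite x).toFinset, chainSign (fibS a) l := by
  rw [eFib, ← finsum_mem_coe_finset, Set.Finite.coe_toFinset]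

lemma eFib_rec (a : Bool) {x : List ℕ} (hx : x ≠ []) :
    eFib a x = ∑ y ∈ coversF x, fibS a y x * eFib a y := by
  classical
  set F : Finset (List (List ℕ)) :=
    (coversF x).biUnion
      (fun y => ((fibChains_finite y).toFinset.image (fun l => l ++ [x]))) with hF
  have hset : (fibChains_finite x).toFinset = F := by
    ext l
    rw [Set.Finite.mem_toFinset, mem_fibChains_iff hx, hF]
    simp only [Finset.mem_biUnion, Finset.mem_image, Set.Finite.mem_toFinset]
    constructor
    · rintro ⟨y, l', hcov, hl', rfl⟩
      exact ⟨y, mem_coversF.2 hcov, l', hl', rfl⟩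
    · rintro ⟨y, hy, l', hl', rfl⟩
      exact ⟨y, l', mem_coversF.1 hy, hl', rfl⟩
  have hdisj : (↑(coversF x) : Set (List ℕ)).PairwiseDisjoint
      (fun y => ((fibChains_finite y).toFinset.image (fun l => l ++ [x]))) := by
    intro y1 h1 y2 h2 hne
    simp only [Function.onFun]
    rw [Finset.disjoint_left]
    intro l hl1 hl2
    simp only [Finset.mem_image, Set.Finite.mem_toFinset] at hl1 hl2
    obtain ⟨l1, hc1, rfl⟩ := hl1
    obtain ⟨l2, hc2, heq⟩ := hl2
    have : l2 = l1 := by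
      have := congrArg List.dropLast heq
      simpa using this
    subst this
    exact hne (Option.some_injective _ (hc2.2.2.symm.trans hc1.2.2)).symm
  rw [eFib_eq_sum, hset, Finset.sum_biUnion hdisj]
  refine Finset.sum_congr rfl ?_
  intro y hy
  rw [Finset.sum_image]
  · have : ∀ l ∈ (fibChains_finite y).toFinset,
        chainSign (fibS a) (l ++ [x]) = fibS a y x * chainSign (fibS a) l := by
      intro l hl
      rw [Set.Finite.mem_toFinset] at hl
      rw [chainSign_concat _ l y x hl.2.2]
      ring
    rw [Finset.sum_congr rfl this, ← Finset.mul_sum, ← eFib_eq_sum]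
  · intro l1 _ l2 _ h
    have := congrArg List.dropLast h
    simpa using this

lemma eFib_one_cons (a : Bool) (w : List ℕ) : eFib a (1 :: w) = eFib a w := by
  rw [eFib_rec a (List.cons_ne_nil 1 w), coversF_one, Finset.sum_singleton,
    fibS_del_head, one_mul]

lemma eFib_two_cons (a : Bool) (w : List ℕ) :
    eFib a (2 :: w) = (if a then 1 else -1) * eFib a w -
      ∑ y ∈ coversF w, fibS a y w * eFib a (2 :: y) := by
  rw [eFib_rec a (List.cons_ne_nil 2 w), coversF_two]
  have hnm : (1 :: w) ∉ (coversF w).image (fun z => 2 :: z) := by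
    simp only [Finset.mem_image]
    rintro ⟨z, -, h⟩
    simp at h
  rw [Finset.sum_insert hnm, fibS_chg_head, eFib_one_cons]
  congr 1
  rw [Finset.sum_image (by intro a _ b _ h; simpa using h)]
  rw [← Finset.sum_neg_distrib]
  refine Finset.sum_congr rfl ?_
  intro y hy
  rw [fibS_cons_two (mem_coversF.1 hy)]
  ring

/-! ### Section 5: recursive tileability predicates -/

def strictB : List ℕ → Bool
  | [] => true
  | 2 :: w => strictB w
  | 1 :: 1 :: w => strictB w
  | _ => false

def dtB : List ℕ → Bool
  | [] => true
  | 1 :: w => dtB w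
  | 2 :: w => strictB w
  | _ => false

@[simp] lemma strictB_nil : strictB [] = true := rfl
@[simp] lemma strictB_two (w : List ℕ) : strictB (2 :: w) = strictB w := by simp [strictB]
@[simp] lemma strictB_one_one (w : List ℕ) : strictB (1 :: 1 :: w) = strictB w := by simp [strictB]
@[simp] lemma strictB_one_two (w : List ℕ) : strictB (1 :: 2 :: w) = false := by simp [strictB]
@[simp] lemma strictB_single_one : strictB [1] = false := by simp [strictB]
@[simp] lemma dtB_nil : dtB [] = true := rfl
@[simp] lemma dtB_one (w : List ℕ) : dtB (1 :: w) = dtB w := by simp [dtB]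
@[simp] lemma dtB_two (w : List ℕ) : dtB (2 :: w) = strictB w := by simp [dtB]

/-- The key exclusive-or identity. -/
lemma dtB_eq_or (w : List ℕ) (hw : IsFibWord w) :
    dtB w = (strictB w || strictB (1 :: w)) ∧ (strictB w && strictB (1 :: w)) = false := by
  induction w with
  | nil => simp
  | cons c t ih =>
    have ht : IsFibWord t := fun d hd => hw d (List.mem_cons_of_mem c hd)
    rcases hw c List.mem_cons_self with rfl | rfl
    · obtain ⟨ih1, ih2⟩ := ih ht
      constructor
      · rw [dtB_one, strictB_one_one, ih1, Bool.or_comm]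
      · rw [strictB_one_one]
        cases h1 : strictB t <;> cases h2 : strictB (1 :: t) <;> simp_all
    · simp

/-! ### Section 6: IsOneRun equivalences -/

def StrictP (x : List ℕ) : Prop := ∀ i k, IsOneRun x i k → Even k

lemma isOneRun_cons_of_ne {c : ℕ} (hc : c ≠ 1) (w : List ℕ) (i k : ℕ) :
    IsOneRun (c :: w) (i + 1) k ↔ IsOneRun w i k := by
  unfold IsOneRun
  simp only [List.length_cons]
  constructor
  · rintro ⟨h1, h2, h3, h4, h5⟩
    refine ⟨by omega, h2, ?_, ?_, ?_⟩
    · intro j hj1 hj2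
      have := h3 (j + 1) (by omega) (by omega)
      simpa using this
    · rcases Nat.eq_zero_or_pos i with rfl | hi
      · left; rfl
      · right
        rcases h4 with h | h
        · omega
        · have he : i + 1 - 1 = (i - 1) + 1 := by omega
          rw [he, List.getD_cons_succ] at h
          exact h
    · rcases h5 with h | h
      · left; omega
      · right
        have he : i + 1 + k = (i + k) + 1 := by omega
        rw [he, List.getD_cons_succ] at h
        exact h
  · rintro ⟨h1, h2, h3, h4, h5⟩
    refine ⟨by omega, h2, ?_, ?_, ?_⟩
    · intro j hj1 hj2
      obtain ⟨m, rfl⟩ : ∃ m, j = m + 1 := ⟨j - 1, by omega⟩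
      rw [List.getD_cons_succ]
      exact h3 m (by omega) (by omega)
    · right
      simp only [Nat.add_sub_cancel]
      rcases Nat.eq_zero_or_pos i with rfl | hi
      · simpa using hc
      · obtain ⟨m, rfl⟩ : ∃ m, i = m + 1 := ⟨i - 1, by omega⟩
        rcases h4 with h | h
        · omega
        · simpa using h
    · rcases h5 with h | h
      · left; omega
      · right
        have he : i + 1 + k = (i + k) + 1 := by omega
        rw [he, List.getD_cons_succ]
        exact h

lemma isOneRun_cons_succ_succ (c : ℕ) (w : List ℕ) (i k : ℕ) :
    IsOneRun (c :: w) (i + 2) k ↔ IsOneRun w (i + 1) k := by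
  unfold IsOneRun
  simp only [List.length_cons]
  constructor
  · rintro ⟨h1, h2, h3, h4, h5⟩
    refine ⟨by omega, h2, ?_, ?_, ?_⟩
    · intro j hj1 hj2
      have := h3 (j + 1) (by omega) (by omega)
      simpa using this
    · right
      rcases h4 with h | h
      · omega
      · have he : i + 2 - 1 = (i + 1 - 1) + 1 := by omega
        rw [he, List.getD_cons_succ] at h
        exact h
    · rcases h5 with h | h
      · left; omega
      · right
        have he : i + 2 + k = (i + 1 + k) + 1 := by omega
        rw [he, List.getD_cons_succ] at h
        exact h
  · rintro ⟨h1, h2, h3, h4, h5⟩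
    refine ⟨by omega, h2, ?_, ?_, ?_⟩
    · intro j hj1 hj2
      obtain ⟨m, rfl⟩ : ∃ m, j = m + 1 := ⟨j - 1, by omega⟩
      rw [List.getD_cons_succ]
      exact h3 m (by omega) (by omega)
    · right
      have he : i + 2 - 1 = (i + 1 - 1) + 1 := by omega
      rw [he, List.getD_cons_succ]
      rcases h4 with h | h
      · omega
      · exact h
    · rcases h5 with h | h
      · left; omega
      · right
        have he : i + 2 + k = (i + 1 + k) + 1 := by omega
        rw [he, List.getD_cons_succ]
        exact h

lemma not_isOneRun_one_cons_one (w : List ℕ) (k : ℕ) : ¬ IsOneRun (1 :: w) 1 k := by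
  rintro ⟨-, -, -, h4, -⟩
  rcases h4 with h | h
  · omega
  · simp at h

lemma isOneRun_zero_getD {x : List ℕ} {k : ℕ} (h : IsOneRun x 0 k) : x.getD 0 0 = 1 :=
  h.2.2.1 0 (le_refl 0) (by have := h.2.1; omega)

lemma strictP_nil : StrictP [] := by
  rintro i k ⟨h1, h2, -⟩
  simp only [List.length_nil] at h1
  omega

lemma strictP_two (w : List ℕ) : StrictP (2 :: w) ↔ StrictP w := by
  constructor
  · intro h i k hr
    exact h (i + 1) k ((isOneRun_cons_of_ne (by norm_num) w i k).2 hr)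
  · intro h i k hr
    cases i with
    | zero =>
      have := isOneRun_zero_getD hr
      simp at this
    | succ m => exact h m k ((isOneRun_cons_of_ne (by norm_num) w m k).1 hr)

lemma strictP_one_one (w : List ℕ) : StrictP (1 :: 1 :: w) ↔ StrictP w := by
  constructor
  · intro h i k hr
    cases i with
    | zero =>
      obtain ⟨h1, h2, h3, h4, h5⟩ := hr
      have hrun : IsOneRun (1 :: 1 :: w) 0 (k + 2) := by
        refine ⟨by simp; omega, by omega, ?_, Or.inl rfl, ?_⟩
        · intro j hj1 hj2
          match j with
          | 0 => rfl
          | 1 => rfl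
          | m + 2 =>
            rw [List.getD_cons_succ, List.getD_cons_succ]
            exact h3 m (by omega) (by omega)
        · rcases h5 with h' | h'
          · left; simp; omega
          · right
            rw [show 0 + (k + 2) = (0 + k) + 1 + 1 by ring, List.getD_cons_succ,
              List.getD_cons_succ]
            exact h'
      have := h 0 (k + 2) hrun
      rcases this with ⟨m, hm⟩
      exact ⟨m - 1, by omega⟩
    | succ m =>
      have : IsOneRun (1 :: 1 :: w) (m + 3) k := by
        rw [isOneRun_cons_succ_succ]
        rw [show m + 1 + 1 = m + 2 by ring, isOneRun_cons_succ_succ]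
        exact hr
      exact h (m + 3) k this
  · intro h i k hr
    cases i with
    | zero =>
      obtain ⟨h1, h2, h3, h4, h5⟩ := hr
      match k with
      | 1 =>
        exfalso
        rcases h5 with h' | h'
        · simp only [List.length_cons] at h'; omega
        · exact h' rfl
      | 2 => exact even_two
      | m + 3 =>
        have hrun : IsOneRun w 0 (m + 1) := by
          refine ⟨?_, by omega, ?_, Or.inl rfl, ?_⟩
          · simp only [List.length_cons] at h1; omega
          · intro j hj1 hj2
            have := h3 (j + 2) (by omega) (by omega)
            simpa using this
          · rcases h5 with h' | h'
            · left; simp only [List.length_cons] at h'; omega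
            · right
              rw [show 0 + (m + 3) = (0 + (m + 1)) + 1 + 1 by ring] at h'
              rw [List.getD_cons_succ, List.getD_cons_succ] at h'
              exact h'
        have := h 0 (m + 1) hrun
        rcases this with ⟨p, hp⟩
        exact ⟨p + 1, by omega⟩
    | succ m =>
      match m with
      | 0 =>
        exfalso
        exact not_isOneRun_one_cons_one (1 :: w) k hr
      | 1 =>
        exfalso
        obtain ⟨-, -, -, h4, -⟩ := hr
        rcases h4 with h' | h'
        · omega
        · exact h' rfl
      | p + 2 =>
        rw [show p + 2 + 1 = p + 1 + 2 by ring, isOneRun_cons_succ_succ,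
          show p + 1 + 1 = p + 2 by ring, isOneRun_cons_succ_succ] at hr
        exact h (p + 1) k hr

lemma not_strictP_single_one : ¬ StrictP [1] := by
  intro h
  have : IsOneRun [1] 0 1 := by
    refine ⟨by simp, by omega, ?_, Or.inl rfl, Or.inl (by simp)⟩
    intro j hj1 hj2
    interval_cases j
    rfl
  have := h 0 1 this
  simp [Nat.even_iff] at this

lemma not_strictP_one_two (w : List ℕ) : ¬ StrictP (1 :: 2 :: w) := by
  intro h
  have : IsOneRun (1 :: 2 :: w) 0 1 := by
    refine ⟨by simp, by omega, ?_, Or.inl rfl, Or.inr (by simp)⟩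
    intro j hj1 hj2
    interval_cases j
    rfl
  have := h 0 1 this
  simp [Nat.even_iff] at this

lemma strictP_iff : ∀ (w : List ℕ), IsFibWord w → (StrictP w ↔ strictB w = true) := by
  intro w
  generalize hn : w.length = n
  induction n using Nat.strong_induction_on generalizing w with
  | _ n ih =>
  intro hw
  match w with
  | [] => simpa using strictP_nil
  | c :: t =>
    rcases hw c List.mem_cons_self with rfl | rfl
    · match t with
      | [] =>
        simp only [strictB_single_one, Bool.false_eq_true, iff_false]
        exact not_strictP_single_one
      | d :: t' =>
        have ht' : IsFibWord t' := fun e he => hw e (by simp [he])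
        rcases hw d (by simp) with rfl | rfl
        · rw [strictP_one_one, strictB_one_one]
          exact ih t'.length (by simp [← hn]) t' rfl ht'
        · simp only [strictB_one_two, Bool.false_eq_true, iff_false]
          exact not_strictP_one_two t'
    · have ht : IsFibWord t := fun e he => hw e (by simp [he])
      rw [strictP_two, strictB_two]
      exact ih t.length (by simp [← hn]) t rfl ht

lemma dt_nil : DominoTileable [] := by
  rintro i k ⟨h1, h2, -⟩ -
  simp only [List.length_nil] at h1
  omega

lemma dt_one (w : List ℕ) : DominoTileable (1 :: w) ↔ DominoTileable w := by
  constructor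
  · intro h i k hr hi
    obtain ⟨m, rfl⟩ : ∃ m, i = m + 1 := ⟨i - 1, by omega⟩
    exact h (m + 2) k ((isOneRun_cons_succ_succ 1 w m k).2 hr) (by omega)
  · intro h i k hr hi
    match i, hi with
    | 1, _ => exact absurd hr (not_isOneRun_one_cons_one w k)
    | m + 2, _ =>
      exact h (m + 1) k ((isOneRun_cons_succ_succ 1 w m k).1 hr) (by omega)

lemma dt_two (w : List ℕ) : DominoTileable (2 :: w) ↔ StrictP w := by
  constructor
  · intro h i k hr
    exact h (i + 1) k ((isOneRun_cons_of_ne (by norm_num) w i k).2 hr) (by omega)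
  · intro h i k hr hi
    obtain ⟨m, rfl⟩ : ∃ m, i = m + 1 := ⟨i - 1, by omega⟩
    exact h m k ((isOneRun_cons_of_ne (by norm_num) w m k).1 hr)

lemma dt_iff : ∀ (w : List ℕ), IsFibWord w → (DominoTileable w ↔ dtB w = true) := by
  intro w
  generalize hn : w.length = n
  induction n using Nat.strong_induction_on generalizing w with
  | _ n ih =>
  intro hw
  match w with
  | [] => simpa using dt_nil
  | c :: t =>
    have ht : IsFibWord t := fun e he => hw e (by simp [he])
    rcases hw c List.mem_cons_self with rfl | rfl
    · rw [dt_one, dtB_one]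
      exact ih t.length (by simp [← hn]) t rfl ht
    · rw [dt_two, dtB_two]
      exact strictP_iff t ht

/-! ### Section 7: the main computation -/

@[simp] lemma vWord_one (w : List ℕ) : vWord (1 :: w) = vWord w := by
  simp [vWord, List.count_cons]

@[simp] lemma vWord_two (w : List ℕ) : vWord (2 :: w) = -vWord w := by
  simp [vWord, List.count_cons, pow_succ]

lemma covsumA (w : List ℕ) (hw : IsFibWord w) :
    ∑ y ∈ coversF w, fibS true y w * (if strictB y then (1 : ℤ) else 0) =
      (if strictB (1 :: w) then (1 : ℤ) else 0) := by
  induction w with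
  | nil => simp [coversF]
  | cons c t ih =>
    have ht : IsFibWord t := fun e he => hw e (by simp [he])
    rcases hw c List.mem_cons_self with rfl | rfl
    · rw [coversF_one, Finset.sum_singleton, fibS_del_head, one_mul, strictB_one_one]
    · have hnm : (1 :: t) ∉ (coversF t).image (fun z => 2 :: z) := by
        simp only [Finset.mem_image]
        rintro ⟨z, -, h⟩
        simp at h
      rw [coversF_two, Finset.sum_insert hnm, fibS_chg_head, if_pos rfl,
        Finset.sum_image (by intro a _ b _ h; simpa using h)]
      have hterms : ∀ y ∈ coversF t,
          fibS true (2 :: y) (2 :: t) * (if strictB (2 :: y) then (1 : ℤ) else 0) =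
            -(fibS true y t * (if strictB y then (1 : ℤ) else 0)) := by
        intro y hy
        rw [fibS_cons_two (mem_coversF.1 hy), strictB_two]
        ring
      rw [Finset.sum_congr rfl hterms, Finset.sum_neg_distrib, ih ht]
      simp

lemma covsumB (w : List ℕ) (hw : IsFibWord w) :
    ∑ y ∈ coversF w, fibS false y w * (if strictB y then vWord y else 0) =
      (if strictB (1 :: w) then vWord (1 :: w) else 0) := by
  induction w with
  | nil => simp [coversF]
  | cons c t ih =>
    have ht : IsFibWord t := fun e he => hw e (by simp [he])
    rcases hw c List.mem_cons_self with rfl | rfl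
    · rw [coversF_one, Finset.sum_singleton, fibS_del_head, one_mul, strictB_one_one]
      simp only [vWord_one]
    · have hnm : (1 :: t) ∉ (coversF t).image (fun z => 2 :: z) := by
        simp only [Finset.mem_image]
        rintro ⟨z, -, h⟩
        simp at h
      rw [coversF_two, Finset.sum_insert hnm, fibS_chg_head, if_neg (by simp),
        Finset.sum_image (by intro a _ b _ h; simpa using h)]
      have hterms : ∀ y ∈ coversF t,
          fibS false (2 :: y) (2 :: t) * (if strictB (2 :: y) then vWord (2 :: y) else 0) =
            fibS false y t * (if strictB y then vWord y else 0) := by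
        intro y hy
        rw [fibS_cons_two (mem_coversF.1 hy), strictB_two, vWord_two]
        split <;> ring
      rw [Finset.sum_congr rfl hterms, ih ht]
      simp only [strictB_one_two, Bool.false_eq_true, if_false, vWord_one]
      ring

lemma master (x : List ℕ) (hx : IsFibWord x) :
    eFib true x = (if dtB x then (1 : ℤ) else 0) ∧
    eFib false x = (if dtB x then vWord x else 0) := by
  generalize hn : x.sum = n
  induction n using Nat.strong_induction_on generalizing x with
  | _ n ih =>
  match x with
  | [] => simp [eFib_nil, vWord]
  | c :: t =>
    have ht : IsFibWord t := fun e he => hx e (by simp [he])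
    rcases hx c List.mem_cons_self with rfl | rfl
    · have hts : t.sum < n := by simp only [List.sum_cons] at hn; omega
      obtain ⟨h1, h2⟩ := ih t.sum hts t ht rfl
      rw [eFib_one_cons, eFib_one_cons, h1, h2, dtB_one, vWord_one]
      exact ⟨rfl, rfl⟩
    · simp only [List.sum_cons] at hn
      have hts : t.sum < n := by omega
      obtain ⟨h1, h2⟩ := ih t.sum hts t ht rfl
      have hcov : ∀ y ∈ coversF t,
          eFib true (2 :: y) = (if strictB y then (1 : ℤ) else 0) ∧
          eFib false (2 :: y) = -(if strictB y then vWord y else 0) := by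
        intro y hy
        have hc := mem_coversF.1 hy
        have hyf : IsFibWord (2 :: y) := by
          intro e he
          rcases he with _ | he
          · right; rfl
          · exact hc.fibWord ht e (by assumption)
        have hys : (2 :: y).sum < n := by
          have := hc.sum_lt
          simp only [List.sum_cons]
          omega
        obtain ⟨g1, g2⟩ := ih (2 :: y).sum hys (2 :: y) hyf rfl
        refine ⟨by rw [g1, dtB_two], ?_⟩
        rw [g2, dtB_two, vWord_two]
        split <;> ring
      obtain ⟨e1, e2⟩ := dtB_eq_or t ht
      constructor
      · rw [eFib_two_cons, if_pos rfl, one_mul, h1]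
        have : ∑ y ∈ coversF t, fibS true y t * eFib true (2 :: y) =
            ∑ y ∈ coversF t, fibS true y t * (if strictB y then (1 : ℤ) else 0) :=
          Finset.sum_congr rfl (fun y hy => by rw [(hcov y hy).1])
        rw [this, covsumA t ht, dtB_two]
        cases hb1 : strictB t <;> cases hb2 : strictB (1 :: t) <;> simp_all
      · rw [eFib_two_cons, if_neg (by simp), h2]
        have : ∑ y ∈ coversF t, fibS false y t * eFib false (2 :: y) =
            -∑ y ∈ coversF t, fibS false y t * (if strictB y then vWord y else 0) := by
          rw [← Finset.sum_neg_distrib]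
          exact Finset.sum_congr rfl (fun y hy => by rw [(hcov y hy).2]; ring)
        rw [this, covsumB t ht, dtB_two, vWord_one, vWord_two]
        cases hb1 : strictB t <;> cases hb2 : strictB (1 :: t) <;> simp_all <;> ring

theorem statement12' (x : List ℕ) (hx : IsFibWord x) :
    (DominoTileable x → eFib true x = 1) ∧
    (¬ DominoTileable x → eFib true x = 0) ∧
    (DominoTileable x → eFib false x = vWord x) ∧
    (¬ DominoTileable x → eFib false x = 0) := by
  obtain ⟨h1, h2⟩ := master x hx
  have hdt := dt_iff x hx
  refine ⟨fun h => ?_, fun h => ?_, fun h => ?_, fun h => ?_⟩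
  · rw [h1, if_pos (hdt.1 h)]
  · rw [h1, if_neg (fun hb => h (hdt.2 hb))]
  · rw [h2, if_pos (hdt.1 h)]
  · rw [h2, if_neg (fun hb => h (hdt.2 hb))]

/-- for every `{1,2}`-word `x`: `e_α(x) = 1` if `x` is
domino-tileable and `0` otherwise; `e_β(x) = v(x)` if `x` is domino-tileable
and `0` otherwise. -/
theorem statement12 (x : List ℕ) (hx : IsFibWord x) :
    (DominoTileable x → eFib true x = 1) ∧
    (¬ DominoTileable x → eFib true x = 0) ∧
    (DominoTileable x → eFib false x = vWord x) ∧
    (¬ DominoTileable x → eFib false x = 0) := by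
  exact statement12' x hx
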